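/- Let n, k ≥ 1 and let a₁, …, a_k be nonnegative integers. In ℝ^{k+n} consider the following finite set Δ₁ of vectors: the first k standard basis vectors e₁,…,e_k; the vector −(e₁+…+e_k); the last n standard basis vectors e_{k+1},…,e_{k+n}; and the vector (−a₁,…,−a_k,−1,…,−1) (with −1 in the last n coordinates). Let Δ = { w ∈ ℝ^{k+n} : ⟨w, v⟩ ≥ −1 for all v ∈ Δ₁ }. Then max { ⟨w, v⟩ : w ∈ Δ, v ∈ Δ₁ } = max(k, n + a₁ + … + a_k). (Via the toric formula lct = 1/(1+max⟨w,v⟩), this recovers lct(ℙ_{ℙⁿ}(O ⊕ O(−a₁) ⊕ … ⊕ O(−a_k))) = 1/(1 + max(k, n + Σaᵢ)).) -/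

import Mathlib

open Matrix

/-!
Write `w = (x, y)` with `x ∈ ℝᵏ`, `y ∈ ℝⁿ`. The inequalities cutting out `Δ` say `xᵢ, yⱼ ≥ -1`,
`∑ xᵢ ≤ 1` and `∑ aᵢ xᵢ + ∑ yⱼ ≤ 1`. Shifting by one, `xᵢ + 1 ≥ 0`, so one coordinate is at most the
sum of all of them: `xᵢ + 1 ≤ ∑ x + k ≤ k + 1`; likewise `yⱼ ≤ n + ∑ aᵢ`, using `∑ aᵢ xᵢ ≥ -∑ aᵢ`.
The same shift bounds the two remaining pairings by `k` and `n + ∑ aᵢ`, and the vertex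
`w = (-1, …, -1)` attains both.
-/

open Finset

section ShiftedSums

variable {ι R : Type*} [Fintype ι] [Field R] [LinearOrder R] [IsStrictOrderedRing R] {f : ι → R}

theorem add_one_le_sum_add_card (hf : ∀ j, -1 ≤ f j) (i : ι) :
    f i + 1 ≤ ∑ j, f j + Fintype.card ι := by
  have hle : f i + 1 ≤ ∑ j, (f j + 1) :=
    single_le_sum (f := fun j => f j + 1) (fun j _ => by linarith [hf j]) (mem_univ i)
  simpa [sum_add_distrib] using hle

theorem neg_card_le_sum (hf : ∀ j, -1 ≤ f j) : -(Fintype.card ι : R) ≤ ∑ j, f j := by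
  have hnonneg : 0 ≤ ∑ j, (f j + 1) := sum_nonneg fun j _ => by linarith [hf j]
  simp only [sum_add_distrib, sum_const, card_univ, nsmul_one] at hnonneg
  linarith

theorem neg_sum_le_sum_mul {a : ι → R} (ha : ∀ j, 0 ≤ a j) (hf : ∀ j, -1 ≤ f j) :
    -∑ j, a j ≤ ∑ j, a j * f j := by
  have hnonneg : 0 ≤ ∑ j, a j * (f j + 1) :=
    sum_nonneg fun j _ => mul_nonneg (ha j) (by linarith [hf j])
  simp only [mul_add, mul_one, sum_add_distrib] at hnonneg
  linarith

end ShiftedSums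

section FanPairing

variable {ι κ R : Type*} [Fintype ι] [Fintype κ] [Field R] [LinearOrder R] [IsStrictOrderedRing R]

/-- `fanPairing a x y g` is `⟨(x, y), v_g⟩`, the generators `v_g` being indexed by `ι ⊕ κ ⊕ Bool`
as `eᵢ`, `e_{k+j}`, `-∑ eᵢ` (`false`) and `(-a, -1, …, -1)` (`true`). -/
def fanPairing (a x : ι → R) (y : κ → R) : ι ⊕ κ ⊕ Bool → R
  | .inl i => x i
  | .inr (.inl j) => y j
  | .inr (.inr false) => -∑ i, x i
  | .inr (.inr true) => -∑ i, a i * x i - ∑ j, y j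

theorem isGreatest_fanPairing (a : ι → R) (ha : ∀ i, 0 ≤ a i) :
    IsGreatest
      {t | ∃ (x : ι → R) (y : κ → R), (∀ g, -1 ≤ fanPairing a x y g) ∧ ∃ g, t = fanPairing a x y g}
      (max (Fintype.card ι : R) (Fintype.card κ + ∑ i, a i)) := by
  have hsum : 0 ≤ ∑ i, a i := sum_nonneg fun i _ => ha i
  constructor
  · have hvertex : ∀ g, -1 ≤ fanPairing a (fun _ => -1) (fun _ : κ => -1) g := by
      rintro (i | j | _ | _) <;>
        simp only [fanPairing, le_refl, mul_neg, mul_one, sum_neg_distrib, neg_neg, sum_const,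
          card_univ, nsmul_eq_mul, sub_neg_eq_add] <;>
        linarith
    rcases max_choice (Fintype.card ι : R) (Fintype.card κ + ∑ i, a i) with h | h <;> rw [h]
    · exact ⟨_, _, hvertex, .inr (.inr false), by simp [fanPairing]⟩
    · exact ⟨_, _, hvertex, .inr (.inr true), by simp [fanPairing, add_comm]⟩
  · rintro _ ⟨x, y, hxy, g, rfl⟩
    have hx : ∀ i, -1 ≤ x i := fun i => hxy (.inl i)
    have hy : ∀ j, -1 ≤ y j := fun j => hxy (.inr (.inl j))
    have hsx : -1 ≤ -∑ i, x i := hxy (.inr (.inr false))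
    have hsy : -1 ≤ -∑ i, a i * x i - ∑ j, y j := hxy (.inr (.inr true))
    have hax := neg_sum_le_sum_mul ha hx
    have hcx := neg_card_le_sum hx
    have hcy := neg_card_le_sum hy
    rcases g with i | j | _ | _
    · exact le_max_of_le_left (show x i ≤ _ by linarith [add_one_le_sum_add_card hx i])
    · exact le_max_of_le_right (show y j ≤ _ by linarith [add_one_le_sum_add_card hy j])
    · exact le_max_of_le_left (by simp only [fanPairing]; linarith)
    · exact le_max_of_le_right (by simp only [fanPairing]; linarith)

end FanPairing

theorem dotProduct_eq_fanPairing {n k : ℕ} {a : Fin k → ℕ}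
    {v : Fin k ⊕ Fin n ⊕ Bool → Fin (k + n) → ℝ}
    (hv1 : ∀ i : Fin k, v (Sum.inl i) = Pi.single (Fin.castAdd n i) 1)
    (hv2 : ∀ j : Fin n, v (Sum.inr (Sum.inl j)) = Pi.single (Fin.natAdd k j) 1)
    (hv3 : v (Sum.inr (Sum.inr false)) = fun t : Fin (k + n) => if (t : ℕ) < k then (-1 : ℝ) else 0)
    (hv4 : v (Sum.inr (Sum.inr true)) =
      fun t : Fin (k + n) => if h : (t : ℕ) < k then -(a ⟨t, h⟩ : ℝ) else -1)
    (w : Fin (k + n) → ℝ) (g : Fin k ⊕ Fin n ⊕ Bool) :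
    w ⬝ᵥ v g = fanPairing (fun i => (a i : ℝ)) (fun i => w (Fin.castAdd n i))
      (fun j => w (Fin.natAdd k j)) g := by
  rcases g with i | j | _ | _
  · simp [fanPairing, hv1, dotProduct_single]
  · simp [fanPairing, hv2, dotProduct_single]
  · simp [fanPairing, hv3, dotProduct, Fin.sum_univ_add]
  · simp [fanPairing, hv4, dotProduct, Fin.sum_univ_add, mul_comm, sub_eq_add_neg]

theorem stmt13_general (n k : ℕ) (a : Fin k → ℕ)
    (v : Fin k ⊕ Fin n ⊕ Bool → Fin (k + n) → ℝ)
    (hv1 : ∀ i : Fin k, v (Sum.inl i) = Pi.single (Fin.castAdd n i) 1)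
    (hv2 : ∀ j : Fin n, v (Sum.inr (Sum.inl j)) = Pi.single (Fin.natAdd k j) 1)
    (hv3 : v (Sum.inr (Sum.inr false)) = fun t : Fin (k + n) => if (t : ℕ) < k then (-1 : ℝ) else 0)
    (hv4 : v (Sum.inr (Sum.inr true)) =
      fun t : Fin (k + n) => if h : (t : ℕ) < k then -(a ⟨t, h⟩ : ℝ) else -1)
    (Δ : Set (Fin (k + n) → ℝ)) (hΔ : Δ = {w | ∀ ι, -1 ≤ w ⬝ᵥ v ι}) :
    IsGreatest {x : ℝ | ∃ w ∈ Δ, ∃ ι, x = w ⬝ᵥ v ι}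
      ((max k (n + ∑ i, a i) : ℕ) : ℝ) := by
  have key := dotProduct_eq_fanPairing hv1 hv2 hv3 hv4
  have hset : {x : ℝ | ∃ w ∈ Δ, ∃ ι, x = w ⬝ᵥ v ι} =
      {t | ∃ (x : Fin k → ℝ) (y : Fin n → ℝ), (∀ g, -1 ≤ fanPairing (fun i => (a i : ℝ)) x y g) ∧
        ∃ g, t = fanPairing (fun i => (a i : ℝ)) x y g} := by
    subst hΔ
    ext t
    constructor
    · rintro ⟨w, hw, g, rfl⟩
      exact ⟨_, _, fun g => key w g ▸ hw g, g, key w g⟩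
    · rintro ⟨x, y, hxy, g, rfl⟩
      refine ⟨Fin.append x y, fun g => ?_, g, ?_⟩ <;> simp [key, hxy]
  rw [hset]
  simpa using isGreatest_fanPairing (κ := Fin n) (fun i => (a i : ℝ)) (fun i => by positivity)

/-- For the fan of `ℙ_{ℙⁿ}(O ⊕ O(−a₁) ⊕ … ⊕ O(−a_k))` with primitive generators
`e₁,…,e_k, −(e₁+…+e_k), e_{k+1},…,e_{k+n}, (−a₁,…,−a_k,−1,…,−1)` and anticanonical
polytope `Δ`, the maximum of `⟨w,v⟩` over `w ∈ Δ`, `v ∈ Δ₁` equals `max(k, n + Σaᵢ)`. -/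
theorem stmt13 (n k : ℕ) (hn : 1 ≤ n) (hk : 1 ≤ k) (a : Fin k → ℕ)
    (v : Fin k ⊕ Fin n ⊕ Bool → Fin (k + n) → ℝ)
    (hv1 : ∀ i : Fin k, v (Sum.inl i) = Pi.single (Fin.castAdd n i) 1)
    (hv2 : ∀ j : Fin n, v (Sum.inr (Sum.inl j)) = Pi.single (Fin.natAdd k j) 1)
    (hv3 : v (Sum.inr (Sum.inr false)) = fun t : Fin (k + n) => if (t : ℕ) < k then (-1 : ℝ) else 0)
    (hv4 : v (Sum.inr (Sum.inr true)) =
      fun t : Fin (k + n) => if h : (t : ℕ) < k then -(a ⟨t, h⟩ : ℝ) else -1)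
    (Δ : Set (Fin (k + n) → ℝ)) (hΔ : Δ = {w | ∀ ι, -1 ≤ w ⬝ᵥ v ι}) :
    IsGreatest {x : ℝ | ∃ w ∈ Δ, ∃ ι, x = w ⬝ᵥ v ι}
      ((max k (n + ∑ i, a i) : ℕ) : ℝ) :=
  stmt13_general n k a v hv1 hv2 hv3 hv4 Δ hΔ
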